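/- For fixed points x, y ∈ ℝⁿ, the projected-sphere gyrospace distance d_gyr(x,y) = (2/√K)·arctan(√K·‖(-x) ⊕_K y‖₂) converges to 2‖x - y‖₂ as K → 0⁺. -/

import Mathlib

open Filter Topology

/-- Möbius addition with curvature `K` on `ℝⁿ`. -/
noncomputable def mobiusAdd {n : ℕ} (K : ℝ) (x y : EuclideanSpace ℝ (Fin n)) :
    EuclideanSpace ℝ (Fin n) :=
  (1 / (1 - 2 * K * (inner ℝ x y : ℝ) + K ^ 2 * ‖x‖ ^ 2 * ‖y‖ ^ 2)) •
    ((1 - 2 * K * (inner ℝ x y : ℝ) - K * ‖y‖ ^ 2) • x + (1 + K * ‖x‖ ^ 2) • y)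

/-!
As `K → 0⁺`, Möbius addition degenerates to vector addition, so `‖(-x) ⊕_K y‖ → ‖x - y‖`,
while `arctan u / u → arctan' 0 = 1` turns `(2/√K) arctan (√K a)` into `2a` in the limit.
-/

namespace Real

theorem tendsto_arctan_mul_div {α : Type*} {l : Filter α} {s a : α → ℝ} {L : ℝ}
    (hs : Tendsto s l (𝓝[≠] 0)) (ha : Tendsto a l (𝓝 L)) :
    Tendsto (fun i => arctan (s i * a i) / s i) l (𝓝 L) := by
  have hslope : ContinuousAt (dslope arctan 0) 0 :=
    continuousAt_dslope_same.mpr (differentiableAt_arctan 0)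
  have hlim : Tendsto (fun i => a i * dslope arctan 0 (s i * a i)) l (𝓝 (L * 1)) := by
    refine ha.mul ?_
    have hsa : Tendsto (fun i => s i * a i) l (𝓝 0) := by
      simpa using (tendsto_nhdsWithin_iff.mp hs).1.mul ha
    simpa [Function.comp_def, dslope_same] using hslope.tendsto.comp hsa
  rw [mul_one] at hlim
  refine hlim.congr' ?_
  filter_upwards [(tendsto_nhdsWithin_iff.mp hs).2] with i (hi : s i ≠ 0)
  -- `arctan u = u · dslope arctan 0 u` holds for every `u`, including `u = 0`.
  have harctan := sub_smul_dslope arctan 0 (s i * a i)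
  simp only [sub_zero, arctan_zero, smul_eq_mul] at harctan
  rw [← harctan]
  field_simp

end Real

section MobiusAdd

variable {n : ℕ}

theorem mobiusAdd_zero_curvature (x y : EuclideanSpace ℝ (Fin n)) :
    mobiusAdd 0 x y = x + y := by
  simp [mobiusAdd]

theorem continuousAt_mobiusAdd_curvature {K : ℝ} (x y : EuclideanSpace ℝ (Fin n))
    (hK : 1 - 2 * K * (inner ℝ x y : ℝ) + K ^ 2 * ‖x‖ ^ 2 * ‖y‖ ^ 2 ≠ 0) :
    ContinuousAt (fun K => mobiusAdd K x y) K := by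
  unfold mobiusAdd
  refine ContinuousAt.fun_smul ?_ (by fun_prop)
  exact continuousAt_const.div (by fun_prop) hK

theorem tendsto_mobiusAdd_curvature_zero (x y : EuclideanSpace ℝ (Fin n)) :
    Tendsto (fun K => mobiusAdd K x y) (𝓝 0) (𝓝 (x + y)) := by
  simpa [mobiusAdd_zero_curvature] using
    (continuousAt_mobiusAdd_curvature x y (K := 0) (by simp)).tendsto

end MobiusAdd

/-- The projected-sphere gyrospace distance converges to (twice) the Euclidean distance
as `K → 0⁺`. -/
theorem gyroDist_sphere_tendsto {n : ℕ} (x y : EuclideanSpace ℝ (Fin n)) :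
    Tendsto
      (fun K : ℝ =>
        (2 / Real.sqrt K) * Real.arctan (Real.sqrt K * ‖mobiusAdd K (-x) y‖))
      (𝓝[>] 0) (𝓝 (2 * ‖x - y‖)) := by
  have hsqrt : Tendsto Real.sqrt (𝓝[>] 0) (𝓝[≠] 0) := by
    refine tendsto_nhdsWithin_iff.mpr ⟨?_, ?_⟩
    · simpa using Real.continuous_sqrt.tendsto 0 |>.mono_left nhdsWithin_le_nhds
    · filter_upwards [self_mem_nhdsWithin] with K (hK : 0 < K)
      exact (Real.sqrt_pos.mpr hK).ne'
  have hnorm : Tendsto (fun K => ‖mobiusAdd K (-x) y‖) (𝓝[>] 0) (𝓝 ‖x - y‖) := by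
    rw [← norm_neg, neg_sub, sub_eq_neg_add]
    exact (tendsto_mobiusAdd_curvature_zero (-x) y).norm.mono_left nhdsWithin_le_nhds
  simp_rw [div_mul_eq_mul_div, mul_div_assoc]
  exact (Real.tendsto_arctan_mul_div hsqrt hnorm).const_mul 2
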